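/- arXiv:1603.02966 — 5 statements merged into one kernel-verified Lean document; each statement's English description precedes it below -/
import Mathlib

section
/- Let B be a finite alphabet equipped with an involutive map a ↦ ā, let S ⊆ B be closed under the involution with ā ≠ a for every a ∈ S, and let w = w₁w₂⋯w_m be a word over B containing no factor aa with a ∈ S and no factor a ā a with a ∈ S. Let k be the number of positions of w that lie inside some occurrence of a factor of length 3 all of whose three letters belong to S (i.e., positions belonging to a maximal block of consecutive S-letters of length at least 3). Then there exists an involuting partition S = S₊ ⊔ S₋ (meaning S̄₊ = S₋, S₊ ∩ S₋ = ∅, S₊ ∪ S₋ = S) such that 16 · |{i : 1 ≤ i < m, w_i ∈ S₊ and w_{i+1} ∈ S₋}| ≥ k. -/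
/-!
A position inside an `S`-triple `x y z` is within distance two of a position `p` at
which `w p, w (p + 1)` are letters of `S` from different orbits `{a, ā}`: if `y = x̄`,
then `z ≠ y` (no factor `aa`) and `z ≠ ȳ = x` (no factor `aā a`). Hence `k` is at most
four times the number of such positions. Orienting every orbit independently at random,
such a position is cut (`w p ∈ S₊`, `w (p + 1) ∈ S₋`) with probability exactly `1/4`,
because the two orbits are distinct; so some orientation cuts at least a quarter of them.
-/

open scoped Classical

open Finset

namespace InvolutedWord

theorem two_pow_card_mul_card_filter_eqOn {α : Type*} [Fintype α] [DecidableEq α] (s : Finset α)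
    (c : α → Bool) :
    2 ^ #s * #{g : α → Bool | ∀ z ∈ s, g z = c z} = 2 ^ Fintype.card α := by
  have hfilter : ({g : α → Bool | ∀ z ∈ s, g z = c z} : Finset _) =
      Fintype.piFinset fun z => if z ∈ s then {c z} else univ := by
    ext g
    simp only [mem_filter, mem_univ, true_and, Fintype.mem_piFinset]
    refine ⟨fun h z => ?_, fun h z hz => by simpa [hz] using h z⟩
    split_ifs with hz
    · simp [h z hz]
    · exact mem_univ _
  rw [hfilter, Fintype.card_piFinset, ← card_add_card_compl s, pow_add]
  congr 1
  simp only [apply_ite Finset.card, card_singleton, card_univ, Fintype.card_bool]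
  rw [prod_ite, prod_const_one, one_mul, prod_const]
  congr 2
  ext z
  simp

theorem exists_le_mul_card_filter {Ω ι : Type*} [Fintype Ω] [Nonempty Ω] (X : Finset ι)
    (R : Ω → ι → Prop) [∀ ω x, Decidable (R ω x)] (c : ℕ)
    (hR : ∀ x ∈ X, Fintype.card Ω ≤ c * #{ω | R ω x}) :
    ∃ ω, #X ≤ c * #{x ∈ X | R ω x} := by
  obtain ⟨ω₀, -, hω₀⟩ :=
    exists_max_image (univ : Finset Ω) (fun ω => #{x ∈ X | R ω x}) univ_nonempty
  refine ⟨ω₀, Nat.le_of_mul_le_mul_right ?_ (Fintype.card_pos (α := Ω))⟩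
  calc #X * Fintype.card Ω = ∑ x ∈ X, Fintype.card Ω := by rw [sum_const, smul_eq_mul]
    _ ≤ ∑ x ∈ X, c * #{ω | R ω x} := sum_le_sum hR
    _ = c * ∑ ω, #{x ∈ X | R ω x} := by
        rw [← mul_sum]
        congr 1
        simp only [card_eq_sum_ones, sum_filter]
        exact sum_comm
    _ ≤ c * ∑ _ω : Ω, #{x ∈ X | R ω₀ x} :=
        Nat.mul_le_mul_left c (sum_le_sum fun ω _ => hω₀ ω (mem_univ ω))
    _ = c * #{x ∈ X | R ω₀ x} * Fintype.card Ω := by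
        rw [sum_const, card_univ, smul_eq_mul]; ring

section Orientation

variable {B : Type*} [Fintype B] (bar : B → B)

noncomputable def isLeader (a : B) : Bool :=
  decide (Fintype.equivFin B a < Fintype.equivFin B (bar a))

noncomputable def orbitRep (a : B) : B :=
  if isLeader bar a then a else bar a

variable {bar}

theorem isLeader_bar (hbar : Function.Involutive bar) {a : B} (ha : bar a ≠ a) :
    isLeader bar (bar a) = !isLeader bar a := by
  have hne : Fintype.equivFin B a ≠ Fintype.equivFin B (bar a) :=
    fun h => ha ((Fintype.equivFin B).injective h).symm
  unfold isLeader
  rw [hbar a]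
  rcases hne.lt_or_gt with h | h <;> simp [h, not_lt_of_gt h]

theorem orbitRep_bar (hbar : Function.Involutive bar) {a : B} (ha : bar a ≠ a) :
    orbitRep bar (bar a) = orbitRep bar a := by
  unfold orbitRep
  rw [isLeader_bar hbar ha, hbar a]
  cases isLeader bar a <;> rfl

theorem orbitRep_eq_or (a : B) : orbitRep bar a = a ∨ orbitRep bar a = bar a := by
  unfold orbitRep
  split_ifs <;> simp

theorem orbitRep_ne_orbitRep (hbar : Function.Involutive bar) {a b : B} (hba : b ≠ a)
    (hbba : b ≠ bar a) : orbitRep bar a ≠ orbitRep bar b := by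
  rcases orbitRep_eq_or (bar := bar) a with ha | ha <;>
    rcases orbitRep_eq_or (bar := bar) b with hb | hb <;> rw [ha, hb]
  · exact hba.symm
  · exact fun h => hbba (by rw [h, hbar])
  · exact hbba.symm
  · exact fun h => hba (hbar.injective h).symm

variable (bar) (S : Finset B)

/-- A map `g : B → Bool` orients every orbit `{a, bar a}`: the value of `g` at the orbit's
representative decides which of its two letters goes to the positive part. -/
noncomputable def posPart (g : B → Bool) : Finset B :=
  {a ∈ S | g (orbitRep bar a) = isLeader bar a}

noncomputable def negPart (g : B → Bool) : Finset B :=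
  {a ∈ S | g (orbitRep bar a) = !isLeader bar a}

variable {bar S}

theorem image_bar_posPart [DecidableEq B] (hbar : Function.Involutive bar)
    (hSbar : ∀ a ∈ S, bar a ∈ S) (hSne : ∀ a ∈ S, bar a ≠ a) (g : B → Bool) :
    (posPart bar S g).image bar = negPart bar S g := by
  ext b
  simp only [mem_image, posPart, negPart, mem_filter]
  constructor
  · rintro ⟨a, ⟨haS, hg⟩, rfl⟩
    refine ⟨hSbar a haS, ?_⟩
    rw [orbitRep_bar hbar (hSne a haS), isLeader_bar hbar (hSne a haS), hg, Bool.not_not]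
  · rintro ⟨hbS, hg⟩
    refine ⟨bar b, ⟨hSbar b hbS, ?_⟩, hbar b⟩
    rw [orbitRep_bar hbar (hSne b hbS), isLeader_bar hbar (hSne b hbS), hg]

theorem disjoint_posPart_negPart (g : B → Bool) :
    Disjoint (posPart bar S g) (negPart bar S g) := by
  rw [disjoint_left]
  intro a ha ha'
  rw [posPart, mem_filter] at ha
  rw [negPart, mem_filter, ha.2] at ha'
  simp at ha'

theorem posPart_union_negPart [DecidableEq B] (g : B → Bool) :
    posPart bar S g ∪ negPart bar S g = S := by
  ext a
  simp only [mem_union, posPart, negPart, mem_filter]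
  rcases Bool.eq_or_eq_not (g (orbitRep bar a)) (isLeader bar a) with h | h <;> simp [h]

theorem card_fun_eq_four_mul_card_filter [DecidableEq B] {a b : B}
    (hab : orbitRep bar a ≠ orbitRep bar b) (ha : a ∈ S) (hb : b ∈ S) :
    Fintype.card (B → Bool) = 4 * #{g | a ∈ posPart bar S g ∧ b ∈ negPart bar S g} := by
  set c : B → Bool := fun z => if z = orbitRep bar a then isLeader bar a else !isLeader bar b
  have hfilter :
      univ.filter (fun g : B → Bool => a ∈ posPart bar S g ∧ b ∈ negPart bar S g) =
      univ.filter fun g => ∀ z ∈ ({orbitRep bar a, orbitRep bar b} : Finset B), g z = c z := by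
    ext g
    simp [posPart, negPart, ha, hb, c, hab.symm]
  have hcount := two_pow_card_mul_card_filter_eqOn {orbitRep bar a, orbitRep bar b} c
  rw [card_pair hab] at hcount
  rw [Fintype.card_fun, Fintype.card_bool, hfilter, ← hcount]
  norm_num

end Orientation

section Word

variable {B : Type*} [DecidableEq B] (bar : B → B) (S : Finset B) (m : ℕ) (w : ℕ → B)

def separatedPositions : Finset ℕ :=
  {p ∈ range m | p + 1 < m ∧ w p ∈ S ∧ w (p + 1) ∈ S ∧
    w (p + 1) ≠ w p ∧ w (p + 1) ≠ bar (w p)}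

variable {bar S m w}

theorem mem_separatedPositions_of_triple (hbar : Function.Involutive bar)
    (hnoaa : ∀ i, i + 1 < m → ¬(w i ∈ S ∧ w (i + 1) = w i))
    (hnoabara : ∀ i, i + 2 < m → ¬(w i ∈ S ∧ w (i + 1) = bar (w i) ∧ w (i + 2) = w i))
    {j : ℕ} (hj : j + 2 < m) (h0 : w j ∈ S) (h1 : w (j + 1) ∈ S) (h2 : w (j + 2) ∈ S) :
    j ∈ separatedPositions bar S m w ∨ j + 1 ∈ separatedPositions bar S m w := by
  simp only [separatedPositions, mem_filter, mem_range]
  have hne0 : w (j + 1) ≠ w j := fun h => hnoaa j (by omega) ⟨h0, h⟩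
  have hne1 : w (j + 2) ≠ w (j + 1) := fun h => hnoaa (j + 1) (by omega) ⟨h1, h⟩
  by_cases hbar0 : w (j + 1) = bar (w j)
  · refine Or.inr ⟨by omega, by omega, h1, h2, hne1, fun hbar1 => ?_⟩
    exact hnoabara j hj ⟨h0, hbar0, by rw [hbar1, hbar0, hbar]⟩
  · exact Or.inl ⟨by omega, by omega, h0, h1, hne0, hbar0⟩

theorem card_covered_le_four_mul (hbar : Function.Involutive bar)
    (hnoaa : ∀ i, i + 1 < m → ¬(w i ∈ S ∧ w (i + 1) = w i))
    (hnoabara : ∀ i, i + 2 < m → ¬(w i ∈ S ∧ w (i + 1) = bar (w i) ∧ w (i + 2) = w i)) :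
    #{i ∈ range m | ∃ j, j + 2 < m ∧ j ≤ i ∧ i ≤ j + 2 ∧
        w j ∈ S ∧ w (j + 1) ∈ S ∧ w (j + 2) ∈ S} ≤
      4 * #(separatedPositions bar S m w) := by
  have hcover : {i ∈ range m | ∃ j, j + 2 < m ∧ j ≤ i ∧ i ≤ j + 2 ∧
      w j ∈ S ∧ w (j + 1) ∈ S ∧ w (j + 2) ∈ S} ⊆
      (separatedPositions bar S m w).biUnion fun p => Icc (p - 1) (p + 2) := by
    intro i hi
    obtain ⟨-, j, hj, hji, hij, h0, h1, h2⟩ := mem_filter.mp hi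
    simp only [mem_biUnion, mem_Icc]
    rcases mem_separatedPositions_of_triple hbar hnoaa hnoabara hj h0 h1 h2 with h | h
    · exact ⟨j, h, by omega, by omega⟩
    · exact ⟨j + 1, h, by omega, by omega⟩
  calc _ ≤ _ := card_le_card hcover
    _ ≤ ∑ p ∈ separatedPositions bar S m w, #(Icc (p - 1) (p + 2)) := card_biUnion_le
    _ ≤ ∑ _p ∈ separatedPositions bar S m w, 4 :=
        sum_le_sum fun p _ => by rw [Nat.card_Icc]; omega
    _ = 4 * #(separatedPositions bar S m w) := by rw [sum_const, smul_eq_mul, mul_comm]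

end Word

end InvolutedWord

open InvolutedWord

/-- Let `S ⊆ B` be closed under an involution `bar` with `bar a ≠ a` on `S`,
and let `w = w₀ ⋯ w_{m-1}` contain no factor `a a` and no factor `a ā a` with `a ∈ S`.
Let `k` be the number of positions of `w` lying inside an occurrence of a factor of
length `3` all of whose letters are in `S`.  Then there is an involuting partition
`S = S₊ ⊔ S₋` such that `16·#{i | wᵢ ∈ S₊, w_{i+1} ∈ S₋} ≥ k`. -/
theorem stmt_3 {B : Type*} [Fintype B] [DecidableEq B]
    (bar : B → B) (hbar : Function.Involutive bar)
    (S : Finset B) (hSbar : ∀ a ∈ S, bar a ∈ S) (hSne : ∀ a ∈ S, bar a ≠ a)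
    (m : ℕ) (w : ℕ → B)
    (hnoaa : ∀ i, i + 1 < m → ¬(w i ∈ S ∧ w (i + 1) = w i))
    (hnoabara : ∀ i, i + 2 < m → ¬(w i ∈ S ∧ w (i + 1) = bar (w i) ∧ w (i + 2) = w i))
    (k : ℕ)
    (hk : k = ((Finset.range m).filter (fun i =>
      ∃ j, j + 2 < m ∧ j ≤ i ∧ i ≤ j + 2 ∧
        w j ∈ S ∧ w (j + 1) ∈ S ∧ w (j + 2) ∈ S)).card) :
    ∃ Sp Sm : Finset B, Sp.image bar = Sm ∧ Disjoint Sp Sm ∧ Sp ∪ Sm = S ∧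
      k ≤ 16 * ((Finset.range m).filter (fun i =>
        i + 1 < m ∧ w i ∈ Sp ∧ w (i + 1) ∈ Sm)).card := by
  obtain ⟨g, hg⟩ := exists_le_mul_card_filter (separatedPositions bar S m w)
    (fun g p => w p ∈ posPart bar S g ∧ w (p + 1) ∈ negPart bar S g) 4 fun p hp => by
      obtain ⟨-, -, h0, h1, hne, hnebar⟩ := mem_filter.mp hp
      exact (card_fun_eq_four_mul_card_filter
        (orbitRep_ne_orbitRep hbar hne hnebar) h0 h1).le
  refine ⟨posPart bar S g, negPart bar S g, image_bar_posPart hbar hSbar hSne g,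
    disjoint_posPart_negPart g, posPart_union_negPart g, ?_⟩
  calc k ≤ 4 * #(separatedPositions bar S m w) :=
        hk ▸ card_covered_le_four_mul hbar hnoaa hnoabara
    _ ≤ 16 * #{p ∈ separatedPositions bar S m w |
          w p ∈ posPart bar S g ∧ w (p + 1) ∈ negPart bar S g} := by omega
    _ ≤ _ := by
        gcongr
        intro p hp
        simp only [separatedPositions, mem_filter] at hp ⊢
        exact ⟨hp.1.1, hp.1.2.1, hp.2⟩
end

section
/- Fix a finite set 𝔯 of resources. Let (A, ρ) be a finite resource alphabet with involution, let A_s ⊆ {a ∈ A : ā = a} be a set of self-involuting letters, and let A' = (A ∖ A_s) ∪ {a₊, a₋ : a ∈ A_s} be the alphabet obtained by replacing each a ∈ A_s by two fresh letters a₊, a₋ with ρ(a₊) = ρ(a₋) = ρ(a) and involution ā₊ = a₋, ā₋ = a₊ (and the involution and ρ unchanged on A ∖ A_s). Let ι : M(A, ρ) → M(A', ρ) be the monoid homomorphism determined by ι(a) = a₊a₋ for a ∈ A_s and ι(b) = b for b ∈ A ∖ A_s, and let η : M(A', ρ) → M(A, ρ) be the monoid homomorphism determined by η(a₊) = a, η(a₋)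 = 1 for a ∈ A_s and η(b) = b otherwise. Then ι and η are well defined on the trace monoids, ι is a morphism of monoids with involution, η ∘ ι is the identity on M(A, ρ), and consequently ι is injective. -/
open scoped Classical

universe u

/-- The partial-commutation relation on words: `ab = ba` whenever `ρ a ∩ ρ b = ∅`. -/
def traceRel {R : Type u} (Γ : Type u) (ρ : Γ → Set R) :
    FreeMonoid Γ → FreeMonoid Γ → Prop := fun u v =>
  ∃ a b : Γ, ρ a ∩ ρ b = ∅ ∧ u = FreeMonoid.of a * FreeMonoid.of b ∧
    v = FreeMonoid.of b * FreeMonoid.of a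

/-- The congruence on the free monoid generated by partial commutation. -/
def traceCon {R : Type u} (Γ : Type u) (ρ : Γ → Set R) : Con (FreeMonoid Γ) :=
  conGen (traceRel Γ ρ)

/-- The trace monoid `M(Γ, ρ)`. -/
abbrev Trace {R : Type u} (Γ : Type u) (ρ : Γ → Set R) : Type u :=
  (traceCon Γ ρ).Quotient

/-- Canonical projection from words to traces. -/
def traceMk {R Γ : Type u} (ρ : Γ → Set R) : FreeMonoid Γ →* Trace Γ ρ :=
  (traceCon Γ ρ).mk'

/-- The trace of a single letter. -/
def traceOf {R Γ : Type u} (ρ : Γ → Set R) (a : Γ) : Trace Γ ρ :=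
  traceMk ρ (FreeMonoid.of a)

/-- Word-level involution: reverse the word and apply `bar` letterwise. -/
def wordStar {Γ : Type u} (bar : Γ → Γ) (u : FreeMonoid Γ) : FreeMonoid Γ :=
  FreeMonoid.ofList (((FreeMonoid.toList u).map bar).reverse)

/-- The alphabet `A' = (A ∖ A_s) ∪ {a₊, a₋ : a ∈ A_s}`: a letter is either a
non-self-involuting letter of `A`, or a pair of a letter of `A_s` with a sign
(`true` = `+`, `false` = `-`). -/
def APlus (A : Type u) (A_s : Set A) : Type u :=
  {b : A // b ∉ A_s} ⊕ ({a : A // a ∈ A_s} × Bool)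

/-- The resource function on `A'`: `ρ(a₊) = ρ(a₋) = ρ(a)`, unchanged on `A ∖ A_s`. -/
def rhoPlus {R A : Type u} (ρ : A → Set R) (A_s : Set A) : APlus A A_s → Set R :=
  Sum.elim (fun b => ρ b.1) (fun p => ρ p.1.1)

/-- The involution on `A'`: `ā₊ = a₋`, `ā₋ = a₊`, and `bar` on `A ∖ A_s`
(for letters `b ∉ A_s` one provably has `bar b ∉ A_s`, so the first branch
of the `dite` never occurs under the hypotheses of the theorem below). -/
noncomputable def barPlus {A : Type u} (bar : A → A) (A_s : Set A) : APlus A A_s → APlus A A_s :=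
  Sum.elim
    (fun b => if h : bar b.1 ∈ A_s then Sum.inr (⟨bar b.1, h⟩, true)
              else Sum.inl ⟨bar b.1, h⟩)
    (fun p => Sum.inr (p.1, !p.2))

/-! A letter-to-word substitution in which every letter inherits only resources of the letter it
replaces sends commuting letters to commuting words, so it descends to the trace monoids; this
gives `ι` (`a ↦ a₊a₋`) and `η` (`a₊ ↦ a`, `a₋ ↦ 1`). Because `ā = a` on `A_s`, the image
`a₊a₋` of `ā` is the reversed-and-barred word `ā₋ā₊ = a₊a₋`, so `ι` intertwines the word
involutions, and these respect the trace congruence since `ρ(ā) = ρ(a)`. Finally `η (ι a) = a`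
on letters, so `η ∘ ι = id` and `ι` is injective. -/

section TraceMonoid

variable {R Γ Γ' : Type u} {ρ : Γ → Set R} {ρ' : Γ' → Set R}

theorem wordStar_of (bar : Γ → Γ) (a : Γ) :
    wordStar bar (FreeMonoid.of a) = FreeMonoid.of (bar a) := rfl

theorem wordStar_mul (bar : Γ → Γ) (u v : FreeMonoid Γ) :
    wordStar bar (u * v) = wordStar bar v * wordStar bar u := by
  simp [wordStar]

theorem FreeMonoid.lift_wordStar {bar : Γ → Γ} {bar' : Γ' → Γ'} {φ : Γ → FreeMonoid Γ'}
    (hφ : ∀ a, φ (bar a) = wordStar bar' (φ a)) (u : FreeMonoid Γ) :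
    FreeMonoid.lift φ (wordStar bar u) = wordStar bar' (FreeMonoid.lift φ u) := by
  induction u using FreeMonoid.inductionOn' with
  | one => rfl
  | of_mul a u ih =>
    rw [wordStar_mul, map_mul, map_mul, wordStar_mul, ih, wordStar_of,
      FreeMonoid.lift_eval_of, FreeMonoid.lift_eval_of, hφ]

theorem traceCon_wordStar {bar : Γ → Γ} (hbar : ∀ a, ρ (bar a) = ρ a) {u v : FreeMonoid Γ}
    (h : traceCon Γ ρ u v) : traceCon Γ ρ (wordStar bar u) (wordStar bar v) := by
  induction h with
  | of u v huv =>
    obtain ⟨a, b, hab, rfl, rfl⟩ := huv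
    rw [wordStar_mul, wordStar_mul, wordStar_of, wordStar_of]
    exact ConGen.Rel.of _ _ ⟨bar b, bar a, by rw [hbar, hbar, Set.inter_comm, hab], rfl, rfl⟩
  | refl => exact ConGen.Rel.refl _
  | symm _ ih => exact ConGen.Rel.symm ih
  | trans _ _ ih₁ ih₂ => exact ConGen.Rel.trans ih₁ ih₂
  | mul _ _ ih₁ ih₂ =>
    rw [wordStar_mul, wordStar_mul]
    exact ConGen.Rel.mul ih₂ ih₁

theorem traceMk_wordStar_eq {bar : Γ → Γ} (hbar : ∀ a, ρ (bar a) = ρ a) {u v : FreeMonoid Γ}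
    (h : traceMk ρ u = traceMk ρ v) : traceMk ρ (wordStar bar u) = traceMk ρ (wordStar bar v) :=
  (Con.eq _).2 (traceCon_wordStar hbar ((Con.eq _).1 h))

theorem traceOf_commute {a b : Γ} (h : ρ a ∩ ρ b = ∅) :
    Commute (traceOf ρ a) (traceOf ρ b) :=
  (Con.eq _).2 (ConGen.Rel.of _ _ ⟨a, b, h, rfl, rfl⟩)

theorem traceMk_commute {u v : FreeMonoid Γ}
    (h : ∀ x ∈ u.toList, ∀ y ∈ v.toList, ρ x ∩ ρ y = ∅) :
    Commute (traceMk ρ u) (traceMk ρ v) := by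
  induction u using FreeMonoid.inductionOn' with
  | one => exact (map_one (traceMk ρ)).symm ▸ Commute.one_left _
  | of_mul a u ih =>
    rw [map_mul]
    refine Commute.mul_left ?_ (ih fun x hx => h x (List.mem_cons_of_mem a hx))
    clear ih
    induction v using FreeMonoid.inductionOn' with
    | one => exact (map_one (traceMk ρ)).symm ▸ Commute.one_right _
    | of_mul b v ih =>
      rw [map_mul]
      exact (traceOf_commute (h a List.mem_cons_self b List.mem_cons_self)).mul_right
        (ih fun x hx y hy => h x hx y (List.mem_cons_of_mem b hy))

noncomputable def traceSubst (φ : Γ → FreeMonoid Γ')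
    (hφ : ∀ a, ∀ x ∈ (φ a).toList, ρ' x ⊆ ρ a) : Trace Γ ρ →* Trace Γ' ρ' :=
  Con.lift _ ((traceMk ρ').comp (FreeMonoid.lift φ)) <| Con.conGen_le.2 <| by
    rintro _ _ ⟨a, b, hab, rfl, rfl⟩
    change traceMk ρ' (φ a) * traceMk ρ' (φ b) = traceMk ρ' (φ b) * traceMk ρ' (φ a)
    exact traceMk_commute fun x hx y hy =>
      Set.subset_eq_empty (Set.inter_subset_inter (hφ a x hx) (hφ b y hy)) hab

theorem traceSubst_traceMk (φ : Γ → FreeMonoid Γ') (hφ : ∀ a, ∀ x ∈ (φ a).toList, ρ' x ⊆ ρ a)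
    (u : FreeMonoid Γ) :
    traceSubst (ρ := ρ) φ hφ (traceMk ρ u) = traceMk ρ' (FreeMonoid.lift φ u) := rfl

theorem traceSubst_traceOf (φ : Γ → FreeMonoid Γ') (hφ : ∀ a, ∀ x ∈ (φ a).toList, ρ' x ⊆ ρ a)
    (a : Γ) : traceSubst (ρ := ρ) φ hφ (traceOf ρ a) = traceMk ρ' (φ a) := rfl

end TraceMonoid

section SplitSelfInvoluting

variable {R A : Type u} (ρ : A → Set R) (A_s : Set A)

noncomputable def splitLetter (a : A) : FreeMonoid (APlus A A_s) :=
  if h : a ∈ A_s then .of (.inr (⟨a, h⟩, true)) * .of (.inr (⟨a, h⟩, false))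
  else .of (.inl ⟨a, h⟩)

def unsplitLetter : APlus A A_s → FreeMonoid A :=
  Sum.elim (fun b => .of b.1) (fun p => if p.2 then .of p.1.1 else 1)

theorem rhoPlus_subset_of_mem_splitLetter (a : A) :
    ∀ x ∈ (splitLetter A_s a).toList, rhoPlus ρ A_s x ⊆ ρ a := by
  unfold splitLetter
  split_ifs
  · rintro x (_ | ⟨_, _ | ⟨_, ⟨⟩⟩⟩) <;> exact subset_rfl
  · rintro x (_ | ⟨_, ⟨⟩⟩)
    exact subset_rfl

theorem subset_rhoPlus_of_mem_unsplitLetter (x : APlus A A_s) :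
    ∀ a ∈ (unsplitLetter A_s x).toList, ρ a ⊆ rhoPlus ρ A_s x := by
  rcases x with b | ⟨a, _ | _⟩
  · rintro _ (_ | ⟨_, ⟨⟩⟩)
    exact subset_rfl
  · rintro _ ⟨⟩
  · rintro _ (_ | ⟨_, ⟨⟩⟩)
    exact subset_rfl

noncomputable def traceSplit : Trace A ρ →* Trace (APlus A A_s) (rhoPlus ρ A_s) :=
  traceSubst (splitLetter A_s) (rhoPlus_subset_of_mem_splitLetter ρ A_s)

noncomputable def traceUnsplit : Trace (APlus A A_s) (rhoPlus ρ A_s) →* Trace A ρ :=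
  traceSubst (unsplitLetter A_s) (subset_rhoPlus_of_mem_unsplitLetter ρ A_s)

theorem lift_unsplitLetter_splitLetter (a : A) :
    FreeMonoid.lift (unsplitLetter A_s) (splitLetter A_s a) = .of a := by
  unfold splitLetter
  split_ifs
  · exact mul_one _
  · rfl

theorem traceUnsplit_comp_traceSplit :
    (traceUnsplit ρ A_s).comp (traceSplit ρ A_s) = MonoidHom.id _ := by
  ext a
  exact congrArg (traceMk ρ) (lift_unsplitLetter_splitLetter A_s a)

variable {ρ A_s} {bar : A → A}

theorem barPlus_inl_of_mem {b : {b : A // b ∉ A_s}} (h : bar b.1 ∈ A_s) :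
    barPlus bar A_s (Sum.inl b) = Sum.inr (⟨bar b.1, h⟩, true) :=
  dif_pos h

theorem barPlus_inl_of_not_mem {b : {b : A // b ∉ A_s}} (h : bar b.1 ∉ A_s) :
    barPlus bar A_s (Sum.inl b) = Sum.inl ⟨bar b.1, h⟩ :=
  dif_neg h

theorem rhoPlus_barPlus (hρ : ∀ a, ρ (bar a) = ρ a) (x : APlus A A_s) :
    rhoPlus ρ A_s (barPlus bar A_s x) = rhoPlus ρ A_s x := by
  rcases x with b | p
  · by_cases hb : bar b.1 ∈ A_s
    · rw [barPlus_inl_of_mem hb]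
      exact hρ b.1
    · rw [barPlus_inl_of_not_mem hb]
      exact hρ b.1
  · rfl

theorem splitLetter_bar (hbar : Function.Involutive bar) (hAs : ∀ a ∈ A_s, bar a = a) (a : A) :
    splitLetter A_s (bar a) = wordStar (barPlus bar A_s) (splitLetter A_s a) := by
  by_cases ha : a ∈ A_s
  · rw [hAs a ha, splitLetter, dif_pos ha]
    rfl
  · have hba : bar a ∉ A_s := fun h => ha (by rwa [← hbar a, hAs _ h])
    rw [splitLetter, splitLetter, dif_neg ha, dif_neg hba]
    exact congrArg FreeMonoid.of (barPlus_inl_of_not_mem (b := ⟨a, ha⟩) hba).symm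

theorem traceSplit_wordStar (hbar : Function.Involutive bar) (hρ : ∀ a, ρ (bar a) = ρ a)
    (hAs : ∀ a ∈ A_s, bar a = a) {u : FreeMonoid A} {w : FreeMonoid (APlus A A_s)}
    (h : traceSplit ρ A_s (traceMk ρ u) = traceMk (rhoPlus ρ A_s) w) :
    traceSplit ρ A_s (traceMk ρ (wordStar bar u)) =
      traceMk (rhoPlus ρ A_s) (wordStar (barPlus bar A_s) w) := by
  rw [traceSplit, traceSubst_traceMk, FreeMonoid.lift_wordStar (splitLetter_bar hbar hAs)]
  exact traceMk_wordStar_eq (rhoPlus_barPlus hρ) h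

end SplitSelfInvoluting

theorem stmt_7_general {R : Type u} {A : Type u}
    (bar : A → A) (hbar : Function.Involutive bar)
    (ρ : A → Set R) (hρ : ∀ a, ρ (bar a) = ρ a)
    (A_s : Set A) (hAs : ∀ a ∈ A_s, bar a = a) :
    ∃ (ι : Trace A ρ →* Trace (APlus A A_s) (rhoPlus ρ A_s))
      (η : Trace (APlus A A_s) (rhoPlus ρ A_s) →* Trace A ρ),
      (∀ (a : A) (h : a ∈ A_s),
        ι (traceOf ρ a) =
          traceOf (rhoPlus ρ A_s) (Sum.inr (⟨a, h⟩, true)) *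
          traceOf (rhoPlus ρ A_s) (Sum.inr (⟨a, h⟩, false))) ∧
      (∀ (a : A) (h : a ∉ A_s),
        ι (traceOf ρ a) = traceOf (rhoPlus ρ A_s) (Sum.inl ⟨a, h⟩)) ∧
      (∀ b : {b : A // b ∉ A_s},
        η (traceOf (rhoPlus ρ A_s) (Sum.inl b)) = traceOf ρ b.1) ∧
      (∀ a : {a : A // a ∈ A_s},
        η (traceOf (rhoPlus ρ A_s) (Sum.inr (a, true))) = traceOf ρ a.1) ∧
      (∀ a : {a : A // a ∈ A_s},
        η (traceOf (rhoPlus ρ A_s) (Sum.inr (a, false))) = 1) ∧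
      (∀ (u : FreeMonoid A) (w : FreeMonoid (APlus A A_s)),
        ι (traceMk ρ u) = traceMk (rhoPlus ρ A_s) w →
        ι (traceMk ρ (wordStar bar u)) =
          traceMk (rhoPlus ρ A_s) (wordStar (barPlus bar A_s) w)) ∧
      (∀ x : Trace A ρ, η (ι x) = x) ∧
      Function.Injective ι := by
  have hinv : Function.LeftInverse (traceUnsplit ρ A_s) (traceSplit ρ A_s) :=
    DFunLike.congr_fun (traceUnsplit_comp_traceSplit ρ A_s)
  refine ⟨traceSplit ρ A_s, traceUnsplit ρ A_s, fun a h => ?_, fun a h => ?_,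
    fun _ => rfl, fun _ => rfl, fun _ => map_one (traceMk ρ),
    fun _ _ => traceSplit_wordStar hbar hρ hAs, hinv, hinv.injective⟩
  · rw [traceSplit, traceSubst_traceOf, splitLetter, dif_pos h, map_mul]
    rfl
  · rw [traceSplit, traceSubst_traceOf, splitLetter, dif_neg h]
    rfl

/-- Eliminating self-involuting letters: the homomorphisms
`ι : M(A,ρ) → M(A',ρ')` with `ι(a) = a₊a₋` for `a ∈ A_s` and `ι(b) = b` otherwise, and
`η : M(A',ρ') → M(A,ρ)` with `η(a₊) = a`, `η(a₋) = 1`, `η(b) = b`, are well defined on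
the trace monoids; `ι` is a morphism of monoids with involution, `η ∘ ι = id`, and
consequently `ι` is injective. -/
theorem stmt_7 {R : Type u} [Fintype R] {A : Type u} [Fintype A]
    (bar : A → A) (hbar : Function.Involutive bar)
    (ρ : A → Set R) (hρ : ∀ a, ρ (bar a) = ρ a)
    (A_s : Set A) (hAs : ∀ a ∈ A_s, bar a = a) :
    ∃ (ι : Trace A ρ →* Trace (APlus A A_s) (rhoPlus ρ A_s))
      (η : Trace (APlus A A_s) (rhoPlus ρ A_s) →* Trace A ρ),
      (∀ (a : A) (h : a ∈ A_s),
        ι (traceOf ρ a) =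
          traceOf (rhoPlus ρ A_s) (Sum.inr (⟨a, h⟩, true)) *
          traceOf (rhoPlus ρ A_s) (Sum.inr (⟨a, h⟩, false))) ∧
      (∀ (a : A) (h : a ∉ A_s),
        ι (traceOf ρ a) = traceOf (rhoPlus ρ A_s) (Sum.inl ⟨a, h⟩)) ∧
      (∀ b : {b : A // b ∉ A_s},
        η (traceOf (rhoPlus ρ A_s) (Sum.inl b)) = traceOf ρ b.1) ∧
      (∀ a : {a : A // a ∈ A_s},
        η (traceOf (rhoPlus ρ A_s) (Sum.inr (a, true))) = traceOf ρ a.1) ∧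
      (∀ a : {a : A // a ∈ A_s},
        η (traceOf (rhoPlus ρ A_s) (Sum.inr (a, false))) = 1) ∧
      (∀ (u : FreeMonoid A) (w : FreeMonoid (APlus A A_s)),
        ι (traceMk ρ u) = traceMk (rhoPlus ρ A_s) w →
        ι (traceMk ρ (wordStar bar u)) =
          traceMk (rhoPlus ρ A_s) (wordStar (barPlus bar A_s) w)) ∧
      (∀ x : Trace A ρ, η (ι x) = x) ∧
      Function.Injective ι :=
  stmt_7_general bar hbar ρ hρ A_s hAs
end

section
/- Fix a finite set 𝔯 of resources. Let (A, ρ) be a resource alphabet with a distinguished letter # ∈ A such that ρ(#) = 𝔯 and ρ(a) ≠ ∅ for every a ∈ A. If u₁, …, u_m and v₁, …, v_n are elements of the submonoid of M(A,ρ) generated by A ∖ {#} and # u₁ # u₂ # ⋯ u_m # = # v₁ # v₂ # ⋯ v_n # holds in M(A, ρ), then m = n and u_i = v_i in M(A, ρ) for all 1 ≤ i ≤ m. -/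
/-!
Since `ρ(#)` is everything and every `ρ(a)` is nonempty, `#` commutes with no letter, while the
other letters commute exactly as in the trace monoid `M(A ∖ {#}, ρ)`. Hence cutting a trace at
its occurrences of `#` is a well-defined homomorphism into the monoid of sequences
`l # m₁ # ⋯ # mₖ # r` with blocks in `M(A ∖ {#}, ρ)`. It sends `# u₁ # ⋯ # uₘ #` to the
sequence with blocks `u₁, …, uₘ`, so both sides of the equation have the same blocks; the
homomorphism `M(A ∖ {#}, ρ) → M(A, ρ)` induced by the inclusion of letters maps them back to the
`uᵢ` and `vᵢ`.
-/

open scoped Classical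

universe u

namespace Trace

section Lift

variable {R Γ : Type u} {ρ : Γ → Set R} {M : Type*} [Monoid M]

theorem traceOf_commute {a b : Γ} (h : ρ a ∩ ρ b = ∅) :
    Commute (traceOf ρ a) (traceOf ρ b) :=
  (Con.eq _).mpr (ConGen.Rel.of _ _ ⟨a, b, h, rfl, rfl⟩)

theorem traceCon_le_ker_lift {g : Γ → M} (hg : ∀ a b, ρ a ∩ ρ b = ∅ → Commute (g a) (g b)) :
    traceCon Γ ρ ≤ Con.ker (FreeMonoid.lift g) :=
  Con.conGen_le.mpr <| by
    rintro _ _ ⟨a, b, hab, rfl, rfl⟩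
    simpa [Con.ker_rel] using (hg a b hab).eq

def lift (g : Γ → M) (hg : ∀ a b, ρ a ∩ ρ b = ∅ → Commute (g a) (g b)) : Trace Γ ρ →* M :=
  Con.lift (traceCon Γ ρ) (FreeMonoid.lift g) (traceCon_le_ker_lift hg)

variable {g : Γ → M} {hg : ∀ a b, ρ a ∩ ρ b = ∅ → Commute (g a) (g b)}

@[simp] theorem lift_traceOf (a : Γ) : lift g hg (traceOf ρ a) = g a :=
  FreeMonoid.lift_eval_of g a

theorem mrange_lift : MonoidHom.mrange (lift g hg) = Submonoid.closure (Set.range g) := by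
  calc MonoidHom.mrange (lift g hg)
      = MonoidHom.mrange ((lift g hg).comp (traceCon Γ ρ).mk') := by
        rw [MonoidHom.mrange_comp, MonoidHom.mrange_eq_top_of_surjective _ Con.mk'_surjective,
          MonoidHom.mrange_eq_map]
    _ = Submonoid.closure (Set.range g) := by
        rw [lift, Con.lift_comp_mk', FreeMonoid.mrange_lift]

theorem hom_ext {f f' : Trace Γ ρ →* M} (h : ∀ a, f (traceOf ρ a) = f' (traceOf ρ a)) :
    f = f' :=
  Con.lift_funext f f' <| DFunLike.congr_fun <|
    FreeMonoid.hom_eq (f := f.comp (traceCon Γ ρ).mk') (g := f'.comp (traceCon Γ ρ).mk') h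

end Lift

section Map

variable {R Γ Δ : Type u} {ρ : Δ → Set R}

def map (f : Γ → Δ) : Trace Γ (ρ ∘ f) →* Trace Δ ρ :=
  lift (fun a => traceOf ρ (f a)) fun _ _ h => traceOf_commute h

@[simp] theorem map_traceOf (f : Γ → Δ) (a : Γ) : map f (traceOf (ρ ∘ f) a) = traceOf ρ (f a) :=
  lift_traceOf a

theorem mrange_map (f : Γ → Δ) :
    MonoidHom.mrange (map (ρ := ρ) f) = Submonoid.closure (Set.range fun a => traceOf ρ (f a)) :=
  mrange_lift

end Map

end Trace

/-- `whole t` stands for `t ∈ T` and `split l ms r` for `l # m₁ # ⋯ # mₖ # r`, in the monoid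
generated by `T` and a letter `#` that commutes with nothing. -/
inductive Segmented (T : Type*)
  | whole (t : T)
  | split (l : T) (ms : List T) (r : T)

namespace Segmented

variable {T : Type*} [Monoid T]

instance : One (Segmented T) := ⟨whole 1⟩

instance : Mul (Segmented T) where
  mul
    | whole s, whole t => whole (s * t)
    | whole s, split l ms r => split (s * l) ms r
    | split l ms r, whole t => split l ms (r * t)
    | split l ms r, split l' ms' r' => split l (ms ++ (r * l') :: ms') r'

@[simp] theorem one_def : (1 : Segmented T) = whole 1 := rfl
@[simp] theorem whole_mul_whole (s t : T) : whole s * whole t = whole (s * t) := rfl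
@[simp] theorem whole_mul_split (s l : T) (ms : List T) (r : T) :
    whole s * split l ms r = split (s * l) ms r := rfl
@[simp] theorem split_mul_whole (l : T) (ms : List T) (r t : T) :
    split l ms r * whole t = split l ms (r * t) := rfl
@[simp] theorem split_mul_split (l : T) (ms : List T) (r l' : T) (ms' : List T) (r' : T) :
    split l ms r * split l' ms' r' = split l (ms ++ (r * l') :: ms') r' := rfl

instance : Monoid (Segmented T) where
  mul_assoc x y z := by
    cases x <;> cases y <;> cases z <;> simp [mul_assoc]
  one_mul x := by cases x <;> simp
  mul_one x := by cases x <;> simp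

@[simps]
def wholeHom : T →* Segmented T where
  toFun := whole
  map_one' := rfl
  map_mul' _ _ := rfl

def sep : Segmented T := split 1 [] 1

theorem sep_mul_prod_ofFn {m : ℕ} (t : Fin m → T) :
    sep * (List.ofFn fun i => whole (t i) * sep).prod = split 1 (List.ofFn t) 1 := by
  induction m with
  | zero => simp [sep]
  | succ m ih =>
    rw [List.ofFn_succ, List.prod_cons, ← mul_assoc, ← mul_assoc, mul_assoc (sep * _),
      ih fun i => t i.succ, List.ofFn_succ]
    simp [sep]

end Segmented

section Hash

variable {R A : Type u} {ρ : A → Set R} {hash : A}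

theorem ne_of_inter_eq_empty (hhash : ρ hash = Set.univ) {a b : A} (hab : ρ a ∩ ρ b = ∅)
    (hb : ρ b ≠ ∅) : a ≠ hash := by
  rintro rfl
  rw [hhash, Set.univ_inter] at hab
  exact hb hab

variable (ρ hash) (hhash : ρ hash = Set.univ) (hρ : ∀ a, ρ a ≠ ∅)

noncomputable def hashSplit : Trace A ρ →* Segmented (Trace {a // a ≠ hash} (ρ ∘ Subtype.val)) :=
  Trace.lift (fun a => if h : a = hash then .sep else .whole (traceOf _ ⟨a, h⟩))
    fun a b hab => by
      have ha := ne_of_inter_eq_empty hhash hab (hρ b)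
      have hb := ne_of_inter_eq_empty hhash (Set.inter_comm (ρ a) (ρ b) ▸ hab) (hρ a)
      rw [dif_neg ha, dif_neg hb]
      exact (Trace.traceOf_commute (ρ := ρ ∘ Subtype.val) (a := ⟨a, ha⟩) (b := ⟨b, hb⟩) hab).map
        Segmented.wholeHom

theorem hashSplit_traceOf_hash : hashSplit ρ hash hhash hρ (traceOf ρ hash) = .sep := by
  simp [hashSplit]

theorem hashSplit_map (t : Trace {a // a ≠ hash} (ρ ∘ Subtype.val)) :
    hashSplit ρ hash hhash hρ (Trace.map Subtype.val t) = .whole t := by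
  have : (hashSplit ρ hash hhash hρ).comp (Trace.map Subtype.val) = Segmented.wholeHom :=
    Trace.hom_ext fun a => by simp [hashSplit, a.2]
  exact DFunLike.congr_fun this t

theorem hashSplit_hash_mul_prod {m : ℕ} (t : Fin m → Trace {a // a ≠ hash} (ρ ∘ Subtype.val)) :
    hashSplit ρ hash hhash hρ
        (traceOf ρ hash * (List.ofFn fun i => Trace.map Subtype.val (t i) * traceOf ρ hash).prod) =
      .split 1 (List.ofFn t) 1 := by
  simp only [map_mul, map_list_prod, List.map_ofFn, Function.comp_def,
    hashSplit_map ρ hash hhash hρ, hashSplit_traceOf_hash ρ hash hhash hρ]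
  exact Segmented.sep_mul_prod_ofFn t

end Hash

theorem stmt_8_general {R : Type u} {A : Type u}
    (ρ : A → Set R) (hash : A) (hhash : ρ hash = Set.univ)
    (hρ : ∀ a : A, ρ a ≠ ∅)
    (m n : ℕ) (u : Fin m → Trace A ρ) (v : Fin n → Trace A ρ)
    (hu : ∀ i, u i ∈
      Submonoid.closure (Set.range fun a : {a : A // a ≠ hash} => traceOf ρ a.1))
    (hv : ∀ j, v j ∈
      Submonoid.closure (Set.range fun a : {a : A // a ≠ hash} => traceOf ρ a.1))
    (heq : traceOf ρ hash * (List.ofFn fun i => u i * traceOf ρ hash).prod =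
           traceOf ρ hash * (List.ofFn fun j => v j * traceOf ρ hash).prod) :
    m = n ∧ ∀ (i : Fin m) (j : Fin n), (i : ℕ) = (j : ℕ) → u i = v j := by
  rw [← Trace.mrange_map] at hu hv
  choose t ht using hu
  choose s hs using hv
  obtain rfl : u = fun i => Trace.map Subtype.val (t i) := funext fun i => (ht i).symm
  obtain rfl : v = fun j => Trace.map Subtype.val (s j) := funext fun j => (hs j).symm
  have hts := congrArg (hashSplit ρ hash hhash hρ) heq
  rw [hashSplit_hash_mul_prod, hashSplit_hash_mul_prod] at hts
  obtain ⟨-, hts, -⟩ := Segmented.split.inj hts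
  obtain rfl : m = n := by simpa using congrArg List.length hts
  refine ⟨rfl, fun i j hij => ?_⟩
  obtain rfl : i = j := Fin.ext hij
  rw [List.ofFn_inj.mp hts]

/-- In a trace monoid `M(A,ρ)` with a marker letter `#` with `ρ(#) = 𝔯`
and `ρ(a) ≠ ∅` for all letters, if `u₁, …, u_m` and `v₁, …, v_n` are traces using only
letters `≠ #` and `# u₁ # u₂ # ⋯ u_m # = # v₁ # v₂ # ⋯ v_n #`, then `m = n` and
`uᵢ = vᵢ` for all `i`. -/
theorem stmt_8 {R : Type u} [Fintype R] {A : Type u} [Fintype A]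
    (ρ : A → Set R) (hash : A) (hhash : ρ hash = Set.univ)
    (hρ : ∀ a : A, ρ a ≠ ∅)
    (m n : ℕ) (u : Fin m → Trace A ρ) (v : Fin n → Trace A ρ)
    (hu : ∀ i, u i ∈
      Submonoid.closure (Set.range fun a : {a : A // a ≠ hash} => traceOf ρ a.1))
    (hv : ∀ j, v j ∈
      Submonoid.closure (Set.range fun a : {a : A // a ≠ hash} => traceOf ρ a.1))
    (heq : traceOf ρ hash * (List.ofFn fun i => u i * traceOf ρ hash).prod =
           traceOf ρ hash * (List.ofFn fun j => v j * traceOf ρ hash).prod) :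
    m = n ∧ ∀ (i : Fin m) (j : Fin n), (i : ℕ) = (j : ℕ) → u i = v j :=
  stmt_8_general ρ hash hhash hρ m n u v hu hv heq
end

section
/- Fix a finite set 𝔯 of resources and a finite alphabet A with an involution a ↦ ā and resource map ρ : A → 2^𝔯 with ρ(ā) = ρ(a). Let N_L consist of a zero element 0 together with all triples (P, S, R) ∈ 2^A × 2^𝔯 × 2^A such that ρ(a) ⊆ S for all a ∈ P ∪ R, the letters of P are pairwise resource-disjoint (a ≠ b in P implies ρ(a) ∩ ρ(b) = ∅), and likewise for R. Define multiplication by: 0·x = x·0 = 0; and (P,S,R)·(P',S',R') = 0 if there exists a ∈ R with ā ∈ P', and otherwise (P,S,R)·(P',S',R') = (P ∪ {a ∈ P' : ρ(a) ∩ S = ∅}, S ∪ S', R' ∪ {a ∈ R : ρ(a) ∩ S' = ∅}). Define an involution by 0̄ = 0 and (P,S,R)‾ = (R̄, S, P̄), where T̄ = {ā : a ∈ T}. Then N_L is a finite monoid with identity element (∅, ∅, ∅), the multiplication is associative and closed on N_L, and the involution satisfies x̿ = x and (xy)‾ = ȳ x̄; i.e., N_L is a finite monoid with involution. -/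
open scoped Classical

universe u

/-- The carrier of `N_L`: a zero element (`none`) together with triples
`(P, S, R) ∈ 2^A × 2^𝔯 × 2^A`. -/
abbrev NLCarrier (A R : Type u) : Type u := Option (Set A × Set R × Set A)

/-- The defining conditions of `N_L`: `ρ(a) ⊆ S` for all `a ∈ P ∪ R`, and the letters of
`P` (resp. of `R`) are pairwise resource-disjoint. -/
def NLValid {A R : Type u} (ρ : A → Set R) : NLCarrier A R → Prop
  | none => True
  | some (P, S, Rt) =>
      (∀ a ∈ P ∪ Rt, ρ a ⊆ S) ∧
      (∀ a ∈ P, ∀ b ∈ P, a ≠ b → ρ a ∩ ρ b = ∅) ∧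
      (∀ a ∈ Rt, ∀ b ∈ Rt, a ≠ b → ρ a ∩ ρ b = ∅)

/-- Multiplication of `N_L`: `0` is absorbing; `(P,S,R)·(P',S',R') = 0` if some `a ∈ R`
has `ā ∈ P'`, and otherwise it is
`(P ∪ {a ∈ P' : ρ a ∩ S = ∅}, S ∪ S', R' ∪ {a ∈ R : ρ a ∩ S' = ∅})`. -/
noncomputable def NLmul {A R : Type u} (bar : A → A) (ρ : A → Set R) :
    NLCarrier A R → NLCarrier A R → NLCarrier A R
  | none, _ => none
  | _, none => none
  | some (P, S, Rt), some (P', S', R') =>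
      if ∃ a ∈ Rt, bar a ∈ P' then none
      else some (P ∪ {a ∈ P' | ρ a ∩ S = ∅}, S ∪ S', R' ∪ {a ∈ Rt | ρ a ∩ S' = ∅})

/-- The identity element `(∅, ∅, ∅)` of `N_L`. -/
def NLone {A R : Type u} : NLCarrier A R := some (∅, ∅, ∅)

/-- The involution of `N_L`: `0̄ = 0` and `(P,S,R)‾ = (R̄, S, P̄)`. -/
def NLstar {A R : Type u} (bar : A → A) : NLCarrier A R → NLCarrier A R
  | none => none
  | some (P, S, Rt) => some (bar '' Rt, S, bar '' P)


lemma aux_disj {R : Type u} {s t S : Set R} (hs : s ⊆ S) (ht : t ∩ S = ∅) : s ∩ t = ∅ := by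
  rw [Set.eq_empty_iff_forall_notMem] at ht ⊢
  rintro x ⟨hxs, hxt⟩
  exact ht x ⟨hxt, hs hxs⟩

lemma aux_image_sep {A R : Type u} (bar : A → A) (ρ : A → Set R)
    (hρ : ∀ a, ρ (bar a) = ρ a) (T : Set A) (S' : Set R) :
    bar '' {a ∈ T | ρ a ∩ S' = ∅} = {a ∈ bar '' T | ρ a ∩ S' = ∅} := by
  ext b
  constructor
  · rintro ⟨a, ⟨ha, hd⟩, rfl⟩
    exact ⟨⟨a, ha, rfl⟩, by rw [hρ]; exact hd⟩
  · rintro ⟨⟨a, ha, rfl⟩, hd⟩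
    exact ⟨a, ⟨ha, by rw [← hρ a]; exact hd⟩, rfl⟩

lemma NLmul_none_left {A R : Type u} (bar : A → A) (ρ : A → Set R) (x : NLCarrier A R) :
    NLmul bar ρ none x = none := by cases x <;> rfl

lemma NLmul_none_right {A R : Type u} (bar : A → A) (ρ : A → Set R) (x : NLCarrier A R) :
    NLmul bar ρ x none = none := by cases x <;> rfl

lemma NLmul_some_some {A R : Type u} (bar : A → A) (ρ : A → Set R)
    (P : Set A) (S : Set R) (Rt P' : Set A) (S' : Set R) (R' : Set A) :
    NLmul bar ρ (some (P, S, Rt)) (some (P', S', R')) =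
      if ∃ a ∈ Rt, bar a ∈ P' then none
      else some (P ∪ {a ∈ P' | ρ a ∩ S = ∅}, S ∪ S', R' ∪ {a ∈ Rt | ρ a ∩ S' = ∅}) := rfl

/-- `N_L` is a finite monoid with involution: the identity `(∅,∅,∅)`
belongs to `N_L`, multiplication is closed and associative on `N_L` with identity
`(∅,∅,∅)`, the involution maps `N_L` to itself and satisfies `x̿ = x` and
`(xy)‾ = ȳ x̄`, and `N_L` is finite. -/
theorem stmt_9 {A R : Type u} [Fintype A] [Fintype R]
    (bar : A → A) (hbar : Function.Involutive bar)
    (ρ : A → Set R) (hρ : ∀ a, ρ (bar a) = ρ a) :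
    NLValid ρ (NLone : NLCarrier A R) ∧
    (∀ x y : NLCarrier A R, NLValid ρ x → NLValid ρ y → NLValid ρ (NLmul bar ρ x y)) ∧
    (∀ x y z : NLCarrier A R, NLValid ρ x → NLValid ρ y → NLValid ρ z →
      NLmul bar ρ (NLmul bar ρ x y) z = NLmul bar ρ x (NLmul bar ρ y z)) ∧
    (∀ x : NLCarrier A R, NLValid ρ x →
      NLmul bar ρ NLone x = x ∧ NLmul bar ρ x NLone = x) ∧
    (∀ x : NLCarrier A R, NLValid ρ x → NLValid ρ (NLstar bar x)) ∧
    (∀ x : NLCarrier A R, NLstar bar (NLstar bar x) = x) ∧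
    (∀ x y : NLCarrier A R, NLValid ρ x → NLValid ρ y →
      NLstar bar (NLmul bar ρ x y) = NLmul bar ρ (NLstar bar y) (NLstar bar x)) ∧
    Finite {x : NLCarrier A R // NLValid ρ x} := by
  refine ⟨⟨by simp, by simp, by simp⟩, ?_, ?_, ?_, ?_, ?_, ?_, Subtype.finite⟩
  · -- closure
    rintro (_ | ⟨P1, S1, R1⟩) (_ | ⟨P2, S2, R2⟩) hx hy <;> try trivial
    obtain ⟨h1, h2, h3⟩ := hx
    obtain ⟨h1', h2', h3'⟩ := hy
    rw [NLmul_some_some]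
    split
    · trivial
    refine ⟨?_, ?_, ?_⟩
    · rintro a (((h | ⟨h, -⟩) | (h | ⟨h, -⟩)))
      · exact (h1 a (Or.inl h)).trans Set.subset_union_left
      · exact (h1' a (Or.inl h)).trans Set.subset_union_right
      · exact (h1' a (Or.inr h)).trans Set.subset_union_right
      · exact (h1 a (Or.inr h)).trans Set.subset_union_left
    · rintro a (ha | ⟨ha, hda⟩) b (hb | ⟨hb, hdb⟩) hne
      · exact h2 a ha b hb hne
      · exact aux_disj (h1 a (Or.inl ha)) hdb
      · rw [Set.inter_comm]; exact aux_disj (h1 b (Or.inl hb)) hda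
      · exact h2' a ha b hb hne
    · rintro a (ha | ⟨ha, hda⟩) b (hb | ⟨hb, hdb⟩) hne
      · exact h3' a ha b hb hne
      · exact aux_disj (h1' a (Or.inr ha)) hdb
      · rw [Set.inter_comm]; exact aux_disj (h1' b (Or.inr hb)) hda
      · exact h3 a ha b hb hne
  · -- associativity
    rintro (_ | ⟨P1, S1, R1⟩) (_ | ⟨P2, S2, R2⟩) (_ | ⟨P3, S3, R3⟩) hx hy hz <;>
      try simp only [NLmul_none_left, NLmul_none_right]
    by_cases h12 : ∃ a ∈ R1, bar a ∈ P2
    · rw [NLmul_some_some _ _ P1, if_pos h12, NLmul_none_left]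
      by_cases h23 : ∃ a ∈ R2, bar a ∈ P3
      · rw [NLmul_some_some _ _ P2, if_pos h23, NLmul_none_right]
      · rw [NLmul_some_some _ _ P2, if_neg h23, NLmul_some_some, if_pos]
        obtain ⟨a, ha, hba⟩ := h12
        exact ⟨a, ha, Or.inl hba⟩
    · rw [NLmul_some_some _ _ P1, if_neg h12]
      by_cases h23 : ∃ a ∈ R2, bar a ∈ P3
      · rw [NLmul_some_some _ _ P2, if_pos h23, NLmul_none_right,
          NLmul_some_some, if_pos]
        obtain ⟨a, ha, hba⟩ := h23
        exact ⟨a, Or.inl ha, hba⟩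
      · rw [NLmul_some_some _ _ P2, if_neg h23, NLmul_some_some, NLmul_some_some]
        by_cases hC : ∃ a ∈ R1, ρ a ∩ S2 = ∅ ∧ bar a ∈ P3
        · rw [if_pos, if_pos]
          · obtain ⟨a, ha, hd, hba⟩ := hC
            exact ⟨a, ha, Or.inr ⟨hba, by rw [hρ]; exact hd⟩⟩
          · obtain ⟨a, ha, hd, hba⟩ := hC
            exact ⟨a, Or.inr ⟨ha, hd⟩, hba⟩
        · rw [if_neg, if_neg]
          · simp only [Option.some.injEq, Prod.mk.injEq]
            refine ⟨?_, ?_, ?_⟩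
            · ext a
              simp only [Set.mem_union, Set.mem_sep_iff, Set.mem_setOf_eq, Set.inter_union_distrib_left,
                Set.union_empty_iff]
              tauto
            · exact Set.union_assoc _ _ _
            · ext a
              simp only [Set.mem_union, Set.mem_sep_iff, Set.mem_setOf_eq, Set.inter_union_distrib_left,
                Set.union_empty_iff]
              tauto
          · rintro ⟨a, ha, (hba | ⟨hba, hd⟩)⟩
            · exact h12 ⟨a, ha, hba⟩
            · exact hC ⟨a, ha, by rw [← hρ a]; exact hd, hba⟩
          · rintro ⟨a, (ha | ⟨ha, hd⟩), hba⟩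
            · exact h23 ⟨a, ha, hba⟩
            · exact hC ⟨a, ha, hd, hba⟩
  · -- identity
    rintro (_ | ⟨P, S, Rt⟩) hx
    · exact ⟨rfl, rfl⟩
    constructor
    · rw [NLone, NLmul_some_some, if_neg (by simp)]
      simp
    · rw [NLone, NLmul_some_some, if_neg (by simp)]
      simp
  · -- star valid
    rintro (_ | ⟨P, S, Rt⟩) hx
    · trivial
    obtain ⟨h1, h2, h3⟩ := hx
    refine ⟨?_, ?_, ?_⟩
    · rintro a (⟨b, hb, rfl⟩ | ⟨b, hb, rfl⟩)
      · rw [hρ]; exact h1 b (Or.inr hb)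
      · rw [hρ]; exact h1 b (Or.inl hb)
    · rintro a ⟨c, hc, rfl⟩ b ⟨d, hd, rfl⟩ hne
      rw [hρ, hρ]
      exact h3 c hc d hd (fun h => hne (by rw [h]))
    · rintro a ⟨c, hc, rfl⟩ b ⟨d, hd, rfl⟩ hne
      rw [hρ, hρ]
      exact h2 c hc d hd (fun h => hne (by rw [h]))
  · -- star involutive
    rintro (_ | ⟨P, S, Rt⟩)
    · rfl
    simp only [NLstar, ← Set.image_comp]
    rw [hbar.comp_self, Set.image_id, Set.image_id]
  · -- antihomomorphism
    rintro (_ | ⟨P1, S1, R1⟩) (_ | ⟨P2, S2, R2⟩) hx hy <;> try rfl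
    by_cases h12 : ∃ a ∈ R1, bar a ∈ P2
    · rw [NLmul_some_some, if_pos h12]
      show (none : NLCarrier A R) = _
      rw [NLstar, NLstar, NLmul_some_some, if_pos]
      obtain ⟨a, ha, hba⟩ := h12
      exact ⟨a, ⟨bar a, hba, hbar a⟩, ⟨a, ha, rfl⟩⟩
    · rw [NLmul_some_some, if_neg h12]
      show NLstar bar (some _) = _
      rw [NLstar, NLstar, NLstar, NLmul_some_some, if_neg]
      · simp only [Option.some.injEq, Prod.mk.injEq]
        refine ⟨?_, Set.union_comm S1 S2, ?_⟩
        · rw [Set.image_union, aux_image_sep bar ρ hρ]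
        · rw [Set.image_union, aux_image_sep bar ρ hρ]
      rintro ⟨a, ⟨b, hb, rfl⟩, ⟨c, hc, hcb⟩⟩
      have hcb' : bar c = b := by rw [hcb, hbar]
      exact h12 ⟨c, hc, by rw [hcb']; exact hb⟩
end

section
/- Let B be an alphabet with an involutive map a ↦ ā and let ℓ ≥ 3. For every word w = w₁⋯w_ℓ over B containing no factor aa and no factor a ā a, consider the uniformly random involuting partition (S₊, S₋) of the set {w_i, w̄_i : 1 ≤ i ≤ ℓ} obtained by independently assigning each pair {a, ā} (with a ≠ ā for all letters occurring in w) either (a ∈ S₊, ā ∈ S₋) or (a ∈ S₋, ā ∈ S₊) with probability 1/2 each. Then the expected number of indices 1 ≤ i < ℓ with w_i ∈ S₊ and w_{i+1} ∈ S₋ is at least ⌊(ℓ−1)/2⌋/4, and ⌊(ℓ−1)/2⌋/4 ≥ ℓ/16. -/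
open scoped Classical
open scoped symmDiff

section Aux
variable {B : Type*} [DecidableEq B]

/-- Toggle the involution pair `{x, bar x}` between the two sides of a partition. -/
def tog (bar : B → B) (x : B) (p : Finset B × Finset B) : Finset B × Finset B :=
  (p.1 ∆ {x, bar x}, p.2 ∆ {x, bar x})

lemma tog_tog (bar : B → B) (x : B) (p : Finset B × Finset B) :
    tog bar x (tog bar x p) = p := by
  simp only [tog]
  exact Prod.ext (symmDiff_symmDiff_cancel_right _ _) (symmDiff_symmDiff_cancel_right _ _)

lemma mem_tog1 {bar : B → B} {x y : B} {p : Finset B × Finset B} :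
    y ∈ (tog bar x p).1 ↔
      ((y ∈ p.1 ∧ y ∉ ({x, bar x} : Finset B)) ∨ (y ∈ ({x, bar x} : Finset B) ∧ y ∉ p.1)) := by
  simp [tog, Finset.mem_symmDiff]

lemma mem_tog2 {bar : B → B} {x y : B} {p : Finset B × Finset B} :
    y ∈ (tog bar x p).2 ↔
      ((y ∈ p.2 ∧ y ∉ ({x, bar x} : Finset B)) ∨ (y ∈ ({x, bar x} : Finset B) ∧ y ∉ p.2)) := by
  simp [tog, Finset.mem_symmDiff]

/-- The "repair" map sending a partition to one with `a` on the plus side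
and `b` on the minus side. -/
def gmap (bar : B → B) (a b : B) (p : Finset B × Finset B) : Finset B × Finset B :=
  let p1 := if a ∈ p.2 then tog bar a p else p
  if b ∈ p1.1 then tog bar b p1 else p1

lemma logic_disj {P1 P2 PD PL : Prop} (hDy : PD → PL)
    (hcov : PL → P1 ∨ P2) (hd : P1 → ¬P2) :
    (P1 ∧ ¬PD) ∨ (PD ∧ ¬P1) → (P2 ∧ ¬PD) ∨ (PD ∧ ¬P2) → False := by tauto

lemma logic_union {P1 P2 PD PL : Prop} (hDy : PD → PL) (h1L : P1 → PL) (h2L : P2 → PL)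
    (hcov : PL → P1 ∨ P2) (hd : P1 → ¬P2) :
    ((P1 ∧ ¬PD) ∨ (PD ∧ ¬P1)) ∨ (P2 ∧ ¬PD) ∨ (PD ∧ ¬P2) ↔ PL := by tauto

end Aux

/-- Let `w = w₀ ⋯ w_{ℓ-1}` (`ℓ ≥ 3`) have no factor `a a` and no factor
`a ā a`, with no self-involuting letter occurring in `w`.  For the uniformly random
involuting partition `(S₊, S₋)` of the letters of `w` and their involutes — equivalently,
averaging over all involuting partitions, each of which corresponds to exactly one
outcome of the independent fair coin flips for the involution-pairs — the expected number
of indices `i` with `wᵢ ∈ S₊` and `w_{i+1} ∈ S₋` is at least `⌊(ℓ-1)/2⌋/4`, and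
`⌊(ℓ-1)/2⌋/4 ≥ ℓ/16`. -/
theorem stmt_14 {B : Type*} [Fintype B] [DecidableEq B]
    (bar : B → B) (hbar : Function.Involutive bar)
    (ℓ : ℕ) (hℓ : 3 ≤ ℓ) (w : ℕ → B)
    (hself : ∀ i, i < ℓ → bar (w i) ≠ w i)
    (h1 : ∀ i, i + 1 < ℓ → w (i + 1) ≠ w i)
    (h2 : ∀ i, i + 2 < ℓ → ¬(w (i + 1) = bar (w i) ∧ w (i + 2) = w i)) :
    let L : Finset B := (Finset.range ℓ).image w ∪ ((Finset.range ℓ).image w).image bar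
    let Part : Finset (Finset B × Finset B) :=
      Finset.univ.filter fun p => p.1.image bar = p.2 ∧ Disjoint p.1 p.2 ∧ p.1 ∪ p.2 = L
    let cnt : Finset B × Finset B → ℕ := fun p =>
      ((Finset.range (ℓ - 1)).filter fun i => w i ∈ p.1 ∧ w (i + 1) ∈ p.2).card
    ((((ℓ - 1) / 2 : ℕ) : ℝ) / 4 ≤ (∑ p ∈ Part, (cnt p : ℝ)) / Part.card) ∧
    (ℓ : ℝ) / 16 ≤ (((ℓ - 1) / 2 : ℕ) : ℝ) / 4 := by
  intro L Part cnt
  -- basic facts about L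
  have hwL : ∀ i, i < ℓ → w i ∈ L := by
    intro i hi
    exact Finset.mem_union_left _ (Finset.mem_image_of_mem w (Finset.mem_range.2 hi))
  have hbarL : ∀ x ∈ L, bar x ∈ L := by
    intro x hx
    rcases Finset.mem_union.1 hx with hx | hx
    · exact Finset.mem_union_right _ (Finset.mem_image_of_mem bar hx)
    · rcases Finset.mem_image.1 hx with ⟨y, hy, rfl⟩
      rw [hbar y]
      exact Finset.mem_union_left _ hy
  have hbarne : ∀ x ∈ L, bar x ≠ x := by
    intro x hx
    rcases Finset.mem_union.1 hx with hx | hx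
    · rcases Finset.mem_image.1 hx with ⟨i, hi, rfl⟩
      exact hself i (Finset.mem_range.1 hi)
    · rcases Finset.mem_image.1 hx with ⟨y, hy, rfl⟩
      rcases Finset.mem_image.1 hy with ⟨i, hi, rfl⟩
      rw [hbar]
      exact fun h => hself i (Finset.mem_range.1 hi) h.symm
  -- characterization of membership in Part
  have hPart : ∀ p : Finset B × Finset B,
      p ∈ Part ↔ p.1.image bar = p.2 ∧ Disjoint p.1 p.2 ∧ p.1 ∪ p.2 = L := by
    intro p
    simp [Part]
  -- sum swap
  have hsum : ∑ p ∈ Part, cnt p =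
      ∑ j ∈ Finset.range (ℓ - 1),
        (Part.filter (fun p => w j ∈ p.1 ∧ w (j + 1) ∈ p.2)).card := by
    simp only [cnt, Finset.card_filter]
    rw [Finset.sum_comm]
  -- swap of sides via bar
  have hmem12 : ∀ p ∈ Part, ∀ x : B, x ∈ p.1 ↔ bar x ∈ p.2 := by
    intro p hp x
    obtain ⟨him, -, -⟩ := (hPart p).1 hp
    constructor
    · intro hx; rw [← him]; exact Finset.mem_image_of_mem bar hx
    · intro hx; rw [← him] at hx
      rcases Finset.mem_image.1 hx with ⟨y, hy, hyx⟩
      have : y = x := hbar.injective hyx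
      rwa [← this]
  have hmem21 : ∀ p ∈ Part, ∀ x : B, x ∈ p.2 ↔ bar x ∈ p.1 := by
    intro p hp x
    obtain ⟨him, -, -⟩ := (hPart p).1 hp
    constructor
    · intro hx; rw [← him] at hx
      rcases Finset.mem_image.1 hx with ⟨y, hy, hyx⟩
      rw [← hyx, hbar y]
      exact hy
    · intro hx; rw [← him]
      exact Finset.mem_image.2 ⟨bar x, hx, hbar x⟩
  -- tog preserves Part
  have htogPart : ∀ x ∈ L, ∀ p ∈ Part, tog bar x p ∈ Part := by
    intro x hxL p hp
    obtain ⟨him, hdis, huni⟩ := (hPart p).1 hp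
    have hxbarL : bar x ∈ L := hbarL x hxL
    rw [hPart]
    refine ⟨?_, ?_, ?_⟩
    · -- image
      have : (p.1 ∆ ({x, bar x} : Finset B)).image bar
          = p.1.image bar ∆ (({x, bar x} : Finset B).image bar) :=
        Finset.image_symmDiff _ _ hbar.injective
      simp only [tog]
      rw [this, him]
      congr 1
      rw [Finset.image_insert, Finset.image_singleton, hbar x]
      exact Finset.pair_comm (bar x) x
    · -- disjoint
      rw [Finset.disjoint_left]
      intro y hy1 hy2
      rw [show (tog bar x p).1 = p.1 ∆ {x, bar x} from rfl, Finset.mem_symmDiff] at hy1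
      rw [show (tog bar x p).2 = p.2 ∆ {x, bar x} from rfl, Finset.mem_symmDiff] at hy2
      have hDy : y ∈ ({x, bar x} : Finset B) → y ∈ L := by
        intro h
        simp only [Finset.mem_insert, Finset.mem_singleton] at h
        rcases h with rfl | rfl
        exacts [hxL, hxbarL]
      have hcov : y ∈ L → y ∈ p.1 ∨ y ∈ p.2 := fun h => Finset.mem_union.1 (huni ▸ h)
      have hd12 : y ∈ p.1 → y ∉ p.2 := fun h => Finset.disjoint_left.1 hdis h
      exact logic_disj hDy hcov hd12 hy1 hy2
    · -- union
      ext y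
      simp only [tog, Finset.mem_union, Finset.mem_symmDiff]
      have hDy : y ∈ ({x, bar x} : Finset B) → y ∈ L := by
        intro h
        simp only [Finset.mem_insert, Finset.mem_singleton] at h
        rcases h with rfl | rfl
        exacts [hxL, hxbarL]
      have h1L : y ∈ p.1 → y ∈ L := fun h => huni ▸ Finset.mem_union_left _ h
      have h2L : y ∈ p.2 → y ∈ L := fun h => huni ▸ Finset.mem_union_right _ h
      have hcov : y ∈ L → y ∈ p.1 ∨ y ∈ p.2 := fun h => Finset.mem_union.1 (huni ▸ h)
      have hd12 : y ∈ p.1 → y ∉ p.2 := fun h => Finset.disjoint_left.1 hdis h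
      exact logic_union hDy h1L h2L hcov hd12
  -- every element of L is in p.1 or p.2
  have hcover : ∀ p ∈ Part, ∀ x ∈ L, x ∈ p.1 ∨ x ∈ p.2 := by
    intro p hp x hx
    obtain ⟨-, -, huni⟩ := (hPart p).1 hp
    exact Finset.mem_union.1 (huni ▸ hx)
  have hdisj : ∀ p ∈ Part, Disjoint p.1 p.2 := fun p hp => ((hPart p).1 hp).2.1
  -- KEY: for each index i, the good partitions are at least a quarter of all
  have key : ∀ i, i + 1 < ℓ →
      Part.card ≤ 4 * (Part.filter (fun p => w i ∈ p.1 ∧ w (i + 1) ∈ p.2)).card := by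
    intro i hi
    set a := w i with ha_def
    set b := w (i + 1) with hb_def
    have haL : a ∈ L := hwL i (by omega)
    have hbL : b ∈ L := hwL (i + 1) hi
    have hba : b ≠ a := h1 i hi
    set G := gmap bar a b with hG_def
    -- G maps Part into the good set
    have hGmem : ∀ p ∈ Part, G p ∈ Part ∧ a ∈ (G p).1 ∧ b ∈ (G p).2 := by
      intro p hp
      set p1 := if a ∈ p.2 then tog bar a p else p with hp1_def
      have hp1 : p1 ∈ Part := by
        rw [hp1_def]; split
        · exact htogPart a haL p hp
        · exact hp
      have hap1 : a ∈ p1.1 := by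
        rw [hp1_def]; split
        · rename_i h
          rw [mem_tog1]
          right
          exact ⟨Finset.mem_insert_self _ _,
            fun hc => Finset.disjoint_left.1 (hdisj p hp) hc h⟩
        · rename_i h
          rcases hcover p hp a haL with h' | h'
          · exact h'
          · exact absurd h' h
      have hGp : G p = if b ∈ p1.1 then tog bar b p1 else p1 := rfl
      by_cases hbp1 : b ∈ p1.1
      · have hG2 : G p = tog bar b p1 := by rw [hGp, if_pos hbp1]
        have habarb : a ∉ ({b, bar b} : Finset B) := by
          intro hc
          rcases Finset.mem_insert.1 hc with hc | hc
          · exact hba hc.symm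
          · -- a = bar b, so b = bar a; b ∈ p1.1 means a ∈ p1.2, contradiction
            rw [Finset.mem_singleton] at hc
            have hbb : b = bar a := by rw [hc, hbar]
            have : a ∈ p1.2 := (hmem21 p1 hp1 a).2 (hbb ▸ hbp1)
            exact Finset.disjoint_left.1 (hdisj p1 hp1) hap1 this
        refine ⟨hG2 ▸ htogPart b hbL p1 hp1, ?_, ?_⟩
        · rw [hG2, mem_tog1]; left; exact ⟨hap1, habarb⟩
        · rw [hG2, mem_tog2]; right
          exact ⟨Finset.mem_insert_self _ _,
            fun hc => Finset.disjoint_left.1 (hdisj p1 hp1) hbp1 hc⟩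
      · have hG2 : G p = p1 := by rw [hGp, if_neg hbp1]
        refine ⟨hG2 ▸ hp1, hG2 ▸ hap1, ?_⟩
        rw [hG2]
        rcases hcover p1 hp1 b hbL with h' | h'
        · exact absurd h' hbp1
        · exact h'
    -- fibers of G have at most 4 elements
    have hfiber : ∀ q, (Part.filter (fun p => G p = q)).card ≤ 4 := by
      intro q
      have hsub : Part.filter (fun p => G p = q) ⊆
          insert q (insert (tog bar a q) (insert (tog bar b q)
            {tog bar a (tog bar b q)})) := by
        intro p hp
        rw [Finset.mem_filter] at hp
        obtain ⟨hpPart, hpq⟩ := hp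
        simp only [Finset.mem_insert, Finset.mem_singleton]
        have hGp : G p = if b ∈ (if a ∈ p.2 then tog bar a p else p).1
            then tog bar b (if a ∈ p.2 then tog bar a p else p)
            else (if a ∈ p.2 then tog bar a p else p) := rfl
        by_cases h1' : a ∈ p.2 <;> by_cases h2' : b ∈ (if a ∈ p.2 then tog bar a p else p).1
        · -- q = tog b (tog a p)
          rw [hGp, if_pos h1', if_pos (by rwa [if_pos h1'] at h2')] at hpq
          right; right; right
          rw [← hpq, tog_tog, tog_tog]
        · rw [hGp, if_pos h1', if_neg (by rwa [if_pos h1'] at h2')] at hpq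
          right; left
          rw [← hpq, tog_tog]
        · rw [hGp, if_neg h1', if_pos (by rwa [if_neg h1'] at h2')] at hpq
          right; right; left
          rw [← hpq, tog_tog]
        · rw [hGp, if_neg h1', if_neg (by rwa [if_neg h1'] at h2')] at hpq
          left; exact hpq
      calc (Part.filter (fun p => G p = q)).card
          ≤ _ := Finset.card_le_card hsub
        _ ≤ 4 := by
            apply le_trans (Finset.card_insert_le _ _)
            apply Nat.succ_le_succ
            apply le_trans (Finset.card_insert_le _ _)
            apply Nat.succ_le_succ
            apply le_trans (Finset.card_insert_le _ _)
            apply Nat.succ_le_succ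
            simp
      -- done
    -- image of G is contained in the good set
    have himg : Part.image G ⊆ Part.filter (fun p => w i ∈ p.1 ∧ w (i + 1) ∈ p.2) := by
      intro q hq
      rcases Finset.mem_image.1 hq with ⟨p, hp, rfl⟩
      obtain ⟨h1', h2', h3'⟩ := hGmem p hp
      exact Finset.mem_filter.2 ⟨h1', h2', h3'⟩
    calc Part.card = ∑ q ∈ Part.image G, (Part.filter (fun p => G p = q)).card :=
          Finset.card_eq_sum_card_image G Part
      _ ≤ ∑ q ∈ Part.image G, 4 := Finset.sum_le_sum fun q _ => hfiber q
      _ = (Part.image G).card * 4 := by rw [Finset.sum_const, smul_eq_mul]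
      _ ≤ (Part.filter (fun p => w i ∈ p.1 ∧ w (i + 1) ∈ p.2)).card * 4 :=
          Nat.mul_le_mul_right 4 (Finset.card_le_card himg)
      _ = 4 * _ := Nat.mul_comm _ _
  -- Part is nonempty
  have hne : Part.Nonempty := by
    classical
    set e := Fintype.equivFin B with he_def
    refine ⟨(L.filter (fun x => e x < e (bar x)), L.filter (fun x => e (bar x) < e x)), ?_⟩
    rw [hPart]
    refine ⟨?_, ?_, ?_⟩
    · ext y
      simp only [Finset.mem_image, Finset.mem_filter]
      constructor
      · rintro ⟨x, ⟨hxL, hxlt⟩, rfl⟩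
        refine ⟨hbarL x hxL, ?_⟩
        rwa [hbar x]
      · rintro ⟨hyL, hylt⟩
        exact ⟨bar y, ⟨hbarL y hyL, by rwa [hbar y]⟩, hbar y⟩
    · rw [Finset.disjoint_left]
      intro x hx1 hx2
      rw [Finset.mem_filter] at hx1 hx2
      exact absurd hx2.2 (not_lt.2 (le_of_lt hx1.2))
    · ext y
      simp only [Finset.mem_union, Finset.mem_filter]
      constructor
      · rintro (⟨h, -⟩ | ⟨h, -⟩) <;> exact h
      · intro hy
        have : e y ≠ e (bar y) := fun h => hbarne y hy (e.injective h.symm)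
        rcases lt_or_gt_of_ne this with h | h
        · exact Or.inl ⟨hy, h⟩
        · exact Or.inr ⟨hy, h⟩
  have hcard_pos : 0 < Part.card := Finset.card_pos.2 hne
  -- main counting inequality in ℕ
  have hmain : (ℓ - 1) * Part.card ≤ 4 * ∑ p ∈ Part, cnt p := by
    rw [hsum, Finset.mul_sum]
    calc (ℓ - 1) * Part.card = ∑ _j ∈ Finset.range (ℓ - 1), Part.card := by
          rw [Finset.sum_const, Finset.card_range, smul_eq_mul]
      _ ≤ _ := Finset.sum_le_sum fun j hj => key j (by
          have := Finset.mem_range.1 hj; omega)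
  constructor
  · -- first inequality
    have hm : ((ℓ - 1) / 2 : ℕ) * Part.card ≤ 4 * ∑ p ∈ Part, cnt p :=
      le_trans (Nat.mul_le_mul_right _ (Nat.div_le_self _ _)) hmain
    have hC : (0 : ℝ) < (Part.card : ℝ) := by exact_mod_cast hcard_pos
    rw [div_le_div_iff₀ (by norm_num) hC]
    have hS : (∑ p ∈ Part, (cnt p : ℝ)) = ((∑ p ∈ Part, cnt p : ℕ) : ℝ) := by
      push_cast; ring
    rw [hS]
    have := (Nat.cast_le (α := ℝ)).2 hm
    push_cast at this ⊢
    linarith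
  · -- second inequality
    have h4 : ℓ ≤ 4 * ((ℓ - 1) / 2) := by omega
    rw [div_le_div_iff₀ (by norm_num) (by norm_num)]
    have := (Nat.cast_le (α := ℝ)).2 h4
    push_cast at this ⊢
    linarith
end
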